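/- If B is signable, then Γ_D is bipartite. -/

import Mathlib

open Matrix

/-- A square integer matrix `M` is *signable* if there is a signing vector `s`
(valued in `{+1, -1}`) with `s i * M i j * s j = |M i j|` for all `i, j`. -/
def IsSignable {k : ℕ} (M : Matrix (Fin k) (Fin k) ℤ) : Prop :=
  ∃ s : Fin k → ℤ, (∀ i, s i = 1 ∨ s i = -1) ∧ ∀ i j, s i * M i j * s j = |M i j|

/-- `{i, j}` is an edge of the maximal-path subgraph `Γ_D` of the digraph `D` with
adjacency matrix `B - 1`: there is an edge from `i` to `j` and no directed path
of length `≥ 2` from `i` to `j`. -/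
def GammaEdge {k : ℕ} (B : Matrix (Fin k) (Fin k) ℤ) (i j : Fin k) : Prop :=
  i < j ∧ 1 ≤ B i j ∧ ∀ m : ℕ, 2 ≤ m → ((B - 1) ^ m) i j = 0

/-- The maximal-path subgraph `Γ_D` is bipartite. -/
def GammaBipartite {k : ℕ} (B : Matrix (Fin k) (Fin k) ℤ) : Prop :=
  ∃ c : Fin k → Bool, ∀ i j : Fin k, GammaEdge B i j → c i ≠ c j

open Classical in
/-- The pairing `⟨i,j⟩`: it is `1` on the diagonal, `(-1)^ℓ(i,j)` where `ℓ(i,j)` is the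
length of a longest directed path from `i` to `j` when such a path exists, and `0`
otherwise. -/
noncomputable def pairing {k : ℕ} (B : Matrix (Fin k) (Fin k) ℤ) (i j : Fin k) : ℤ :=
  if i = j then 1
  else if ∃ m : ℕ, 1 ≤ m ∧ ((B - 1) ^ m) i j ≠ 0 then
    (-1 : ℤ) ^ sSup {m : ℕ | 1 ≤ m ∧ ((B - 1) ^ m) i j ≠ 0}
  else 0

/-- `B⁽ᵛ⁾`: the matrix obtained from `B` by replacing every off-diagonal entry in row
`v` and in column `v` by `0` (deleting the vertex `v` from the digraph). -/
def vertexDelete {k : ℕ} (B : Matrix (Fin k) (Fin k) ℤ) (v : Fin k) :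
    Matrix (Fin k) (Fin k) ℤ :=
  Matrix.of fun i j => if i ≠ j ∧ (i = v ∨ j = v) then 0 else B i j

/-- `(i,j)` is a zero pair: no directed path from `i` to `j`. -/
def ZeroPair {k : ℕ} (B : Matrix (Fin k) (Fin k) ℤ) (i j : Fin k) : Prop :=
  ∀ m : ℕ, 1 ≤ m → ((B - 1) ^ m) i j = 0

/-- `(i,j)` is a unit pair: all directed paths from `i` to `j` have length one. -/
def UnitPair {k : ℕ} (B : Matrix (Fin k) (Fin k) ℤ) (i j : Fin k) : Prop :=
  1 ≤ B i j ∧ ∀ m : ℕ, 2 ≤ m → ((B - 1) ^ m) i j = 0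

/-- `(i,j)` is a composite pair: every directed path from `i` to `j` passes through
some fixed intermediate vertex `v`. -/
def CompositePair {k : ℕ} (B : Matrix (Fin k) (Fin k) ℤ) (i j : Fin k) : Prop :=
  ∃ v : Fin k, i < v ∧ v < j ∧ ∀ m : ℕ, 1 ≤ m → ((vertexDelete B v - 1) ^ m) i j = 0

/-- `(i,j)` is a prime pair: `i < j` and `(i,j)` is neither a zero pair, a unit pair,
nor a composite pair. -/
def PrimePair {k : ℕ} (B : Matrix (Fin k) (Fin k) ℤ) (i j : Fin k) : Prop :=
  i < j ∧ ¬ZeroPair B i j ∧ ¬UnitPair B i j ∧ ¬CompositePair B i j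


/-!
Write `B = 1 + N` with `N` strictly upper triangular, hence nilpotent, so that
`B⁻¹ = ∑ₘ (-N)ᵐ`. For an edge `{i, j}` of `Γ_D` every power `Nᵐ` with `m ≥ 2` vanishes
at `(i, j)`, so `B⁻¹ i j = -B i j < 0`. A signing of `B⁻¹` must then give `i` and `j`
opposite signs, and the signs themselves are a 2-colouring of `Γ_D`.
-/

open Finset

namespace Matrix

section StrictlyUpperTriangular

variable {R : Type*} [Semiring R] {n : ℕ} {N : Matrix (Fin n) (Fin n) R}

theorem pow_apply_eq_zero_of_lt_add (hN : ∀ i j, ¬i < j → N i j = 0) (m : ℕ) :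
    ∀ i j : Fin n, (j : ℕ) < i + m → (N ^ m) i j = 0 := by
  induction m with
  | zero =>
    intro i j hji
    rw [pow_zero, one_apply_ne (Fin.ne_of_gt (by simpa using hji))]
  | succ m ih =>
    intro i j hji
    rw [pow_succ', mul_apply]
    refine sum_eq_zero fun k _ => ?_
    by_cases hik : i < k
    · rw [ih k j (by rw [Fin.lt_def] at hik; omega), mul_zero]
    · rw [hN i k hik, zero_mul]

theorem pow_card_eq_zero_of_strictlyUpper (hN : ∀ i j, ¬i < j → N i j = 0) : N ^ n = 0 := by
  ext i j
  exact pow_apply_eq_zero_of_lt_add hN n i j (by omega)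

end StrictlyUpperTriangular

theorem inv_one_add_eq_sum_neg_pow {R ι : Type*} [CommRing R] [Fintype ι] [DecidableEq ι]
    {N : Matrix ι ι R} {k : ℕ} (hN : N ^ k = 0) :
    (1 + N)⁻¹ = ∑ m ∈ range k, (-N) ^ m := by
  refine inv_eq_right_inv ?_
  have hgeom := mul_neg_geom_sum (-N) k
  rwa [sub_neg_eq_add, neg_pow, hN, mul_zero, sub_zero] at hgeom

end Matrix

section UnitriangularInverse

variable {n : ℕ} {B : Matrix (Fin n) (Fin n) ℤ}

theorem sub_one_apply_eq_zero_of_not_lt (h1 : ∀ i, B i i = 1)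
    (h2 : ∀ i j : Fin n, j < i → B i j = 0) (i j : Fin n) (hij : ¬i < j) :
    (B - 1) i j = 0 := by
  rcases eq_or_ne i j with rfl | hne
  · simp [h1]
  · simp [one_apply_ne hne, h2 i j (lt_of_le_of_ne (not_lt.mp hij) hne.symm)]

theorem inv_eq_sum_neg_pow_sub_one (h1 : ∀ i, B i i = 1)
    (h2 : ∀ i j : Fin n, j < i → B i j = 0) :
    B⁻¹ = ∑ m ∈ range n, (-(B - 1)) ^ m := by
  have hnil := pow_card_eq_zero_of_strictlyUpper (sub_one_apply_eq_zero_of_not_lt h1 h2)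
  rw [← inv_one_add_eq_sum_neg_pow hnil, add_sub_cancel]

/-- On an edge of `Γ_D` only the path of length one contributes to `B⁻¹ = ∑ₘ (-N)ᵐ`. -/
theorem inv_apply_eq_neg_of_gammaEdge (h1 : ∀ i, B i i = 1)
    (h2 : ∀ i j : Fin n, j < i → B i j = 0) {i j : Fin n} (he : GammaEdge B i j) :
    B⁻¹ i j = -B i j := by
  obtain ⟨hij, -, hlong⟩ := he
  have hne : i ≠ j := Fin.ne_of_lt hij
  have hn : 1 < n := by have := j.isLt; rw [Fin.lt_def] at hij; omega
  rw [inv_eq_sum_neg_pow_sub_one h1 h2, Matrix.sum_apply,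
    sum_eq_single_of_mem 1 (mem_range.mpr hn)]
  · simp [one_apply_ne hne]
  · intro m _ hm1
    rcases Nat.lt_or_ge m 2 with hm | hm
    · obtain rfl : m = 0 := by omega
      simp [one_apply_ne hne]
    · rw [← neg_one_smul ℤ (B - 1), smul_pow, Matrix.smul_apply, hlong m hm, smul_zero]

end UnitriangularInverse

theorem stmt3_general {n : ℕ} (B : Matrix (Fin n) (Fin n) ℤ)
    (h1 : ∀ i, B i i = 1) (h2 : ∀ i j : Fin n, j < i → B i j = 0)
    (hsig : IsSignable B⁻¹) :
    GammaBipartite B := by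
  obtain ⟨s, hs, hsigned⟩ := hsig
  refine ⟨fun i => decide (s i = 1), fun i j he => ?_⟩
  have hpos : 0 < B i j := he.2.1
  have hij := hsigned i j
  rw [inv_apply_eq_neg_of_gammaEdge h1 h2 he, abs_neg, abs_of_pos hpos] at hij
  rcases hs i with hi | hi <;> rcases hs j with hj | hj <;> simp [hi, hj] at hij ⊢ <;> omega

/-- If `B` is signable, then `Γ_D` is bipartite. -/
theorem stmt3 {n : ℕ} (hn : 1 ≤ n) (B : Matrix (Fin n) (Fin n) ℤ)
    (h1 : ∀ i, B i i = 1) (h2 : ∀ i j : Fin n, j < i → B i j = 0)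
    (h3 : ∀ i j : Fin n, i < j → 0 ≤ B i j)
    (hsig : IsSignable B⁻¹) :
    GammaBipartite B :=
  stmt3_general B h1 h2 hsig
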